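/- Let A = {0,1,2,4,8,11,16,21,22,27,32,35,39,41,42} and D = {0,1,3,4,5,8,12,13,14,18,19,20,21,23,26,27,29,30,32,34,36} be subsets of ℤ/43ℤ, and let B ⊆ ℤ/43ℤ be the Paley difference set consisting of the nonzero quadratic residues modulo 43. Let MA, MB, MD be the associated binary circulant matrices of order 43 (with entry −1 at (r,s) if s − r lies in the set, and +1 otherwise). Then MA is symmetric (MAᵀ = MA) and MA·MAᵀ + 2·(MB·MBᵀ) + MD·MDᵀ = 172·I; consequently plugging (A, B, C = B, D) into the GP array yields a symmetric Hadamard matrix of order 172. -/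
import Mathlib

open Matrix

/-- The binary circulant matrix of order `v` associated to a subset `X ⊆ ℤ/vℤ`:
the entry at `(r, s)` is `-1` if `s - r ∈ X` and `+1` otherwise. -/
def circOf {v : ℕ} (X : Finset (ZMod v)) : Matrix (ZMod v) (ZMod v) ℤ :=
  Matrix.of fun r s => if s - r ∈ X then -1 else 1

/-- The back-diagonal permutation matrix `R` of order `v`:
`R i j = 1` if `i + j = -1` in `ZMod v`, and `0` otherwise. -/
def backDiag (v : ℕ) : Matrix (ZMod v) (ZMod v) ℤ :=
  Matrix.of fun i j => if i + j = -1 then 1 else 0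

/-- The GP array of Balonin and Seberry, built from four matrices of order `v`,
as a `4v × 4v` matrix indexed by `Fin 4 × ZMod v`. -/
def GParray (v : ℕ) [NeZero v] (A B C D : Matrix (ZMod v) (ZMod v) ℤ) :
    Matrix (Fin 4 × ZMod v) (Fin 4 × ZMod v) ℤ :=
  Matrix.of fun p q =>
    (![![A, B * backDiag v, C * backDiag v, D * backDiag v],
       ![C * backDiag v, Dᵀ * backDiag v, -A, -(Bᵀ * backDiag v)],
       ![B * backDiag v, -A, -(Dᵀ * backDiag v), Cᵀ * backDiag v],
       ![D * backDiag v, -(Cᵀ * backDiag v), Bᵀ * backDiag v, -A]] p.1 q.1) p.2 q.2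

/-- The Paley difference set in `ℤ/43ℤ`: the nonzero quadratic residues mod 43. -/
def paleySet : Finset (ZMod 43) :=
  Finset.univ.filter fun x => x ≠ 0 ∧ ∃ y : ZMod 43, y ^ 2 = x

/-- The binary circulant matrix associated to the Paley difference set in `ℤ/43ℤ`. -/
def paleyCirc : Matrix (ZMod 43) (ZMod 43) ℤ := circOf paleySet

/-! ### Auxiliary definitions -/

def SA : Finset (ZMod 43) := {0, 1, 2, 4, 8, 11, 16, 21, 22, 27, 32, 35, 39, 41, 42}
def SB : Finset (ZMod 43) := {1,4,6,9,10,11,13,14,15,16,17,21,23,24,25,31,35,36,38,40,41}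
def SD : Finset (ZMod 43) := {0, 1, 3, 4, 5, 8, 12, 13, 14, 18, 19, 20, 21, 23, 26, 27, 29, 30, 32, 34, 36}

lemma paleySet_eq : paleySet = SB := by decide

def chi (X : Finset (ZMod 43)) (d : ZMod 43) : ℤ := if d ∈ X then -1 else 1

set_option maxHeartbeats 4000000 in
set_option maxRecDepth 10000 in
lemma key : ∀ d : ZMod 43,
    (∑ u : ZMod 43, (chi SA u * chi SA (u + d) + 2 * (chi SB u * chi SB (u + d)) +
      chi SD u * chi SD (u + d))) = if d = 0 then 172 else 0 := by decide

/-! ### backDiag lemmas -/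

lemma mul_backDiag_apply (X : Matrix (ZMod 43) (ZMod 43) ℤ) (i j : ZMod 43) :
    (X * backDiag 43) i j = X i (-1 - j) := by
  rw [Matrix.mul_apply]
  have h : ∀ k : ZMod 43, X i k * backDiag 43 k j = if k = -1 - j then X i k else 0 := by
    intro k
    simp only [backDiag, Matrix.of_apply, mul_ite, mul_one, mul_zero]
    exact if_congr (Iff.symm eq_sub_iff_add_eq) rfl rfl
  simp only [h]
  simp [Finset.sum_ite_eq']

lemma backDiag_mul_apply (X : Matrix (ZMod 43) (ZMod 43) ℤ) (i j : ZMod 43) :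
    (backDiag 43 * X) i j = X (-1 - i) j := by
  rw [Matrix.mul_apply]
  have h : ∀ k : ZMod 43, backDiag 43 i k * X k j = if k = -1 - i then X k j else 0 := by
    intro k
    simp only [backDiag, Matrix.of_apply, ite_mul, one_mul, zero_mul]
    refine if_congr ?_ rfl rfl
    rw [eq_sub_iff_add_eq, add_comm]
  simp only [h]
  simp [Finset.sum_ite_eq']

lemma backDiag_transpose : (backDiag 43)ᵀ = backDiag 43 := by
  ext i j
  simp only [backDiag, Matrix.transpose_apply, Matrix.of_apply]
  exact if_congr (by rw [add_comm]) rfl rfl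

lemma backDiag_mul_backDiag : backDiag 43 * backDiag 43 = 1 := by
  ext i j
  rw [backDiag_mul_apply]
  simp only [backDiag, Matrix.of_apply, Matrix.one_apply]
  refine if_congr ?_ rfl rfl
  constructor
  · intro h
    linear_combination -h
  · rintro rfl
    ring

lemma backDiag_mul_circulant (f : ZMod 43 → ℤ) :
    backDiag 43 * Matrix.circulant f = (Matrix.circulant f)ᵀ * backDiag 43 := by
  ext i j
  rw [backDiag_mul_apply, mul_backDiag_apply, Matrix.transpose_apply,
    Matrix.circulant_apply, Matrix.circulant_apply]
  congr 1
  ring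

lemma backDiag_mul_circulant_t (f : ZMod 43 → ℤ) :
    backDiag 43 * (Matrix.circulant f)ᵀ = Matrix.circulant f * backDiag 43 := by
  rw [Matrix.transpose_circulant, backDiag_mul_circulant, Matrix.transpose_circulant]
  simp only [neg_neg]

/-! ### circOf as circulant -/

lemma circOf_eq_circulant (X : Finset (ZMod 43)) :
    circOf X = Matrix.circulant (fun d => if -d ∈ X then (-1 : ℤ) else 1) := by
  ext r s
  simp only [circOf, Matrix.of_apply, Matrix.circulant_apply, neg_sub]

/-! ### The block structure of the GP array -/

def blocksM (A B C D : Matrix (ZMod 43) (ZMod 43) ℤ) :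
    Fin 4 → Fin 4 → Matrix (ZMod 43) (ZMod 43) ℤ :=
  ![![A, B * backDiag 43, C * backDiag 43, D * backDiag 43],
    ![C * backDiag 43, Dᵀ * backDiag 43, -A, -(Bᵀ * backDiag 43)],
    ![B * backDiag 43, -A, -(Dᵀ * backDiag 43), Cᵀ * backDiag 43],
    ![D * backDiag 43, -(Cᵀ * backDiag 43), Bᵀ * backDiag 43, -A]]

lemma GParray_apply (A B C D : Matrix (ZMod 43) (ZMod 43) ℤ) (p q : Fin 4 × ZMod 43) :
    GParray 43 A B C D p q = blocksM A B C D p.1 q.1 p.2 q.2 := rfl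

set_option maxHeartbeats 1000000 in
/-- The master lemma: the GP array works given the algebraic identities. -/
lemma GP_master (A B D : Matrix (ZMod 43) (ZMod 43) ℤ)
    (hA : Aᵀ = A)
    (hRA : backDiag 43 * A = A * backDiag 43)
    (hRB : backDiag 43 * B = Bᵀ * backDiag 43)
    (hRBt : backDiag 43 * Bᵀ = B * backDiag 43)
    (hRD : backDiag 43 * D = Dᵀ * backDiag 43)
    (hRDt : backDiag 43 * Dᵀ = D * backDiag 43)
    (cAB : A * B = B * A) (cAD : A * D = D * A) (cBD : B * D = D * B)
    (cABt : A * Bᵀ = Bᵀ * A) (cADt : A * Dᵀ = Dᵀ * A) (cBDt : B * Dᵀ = Dᵀ * B)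
    (cBtB : Bᵀ * B = B * Bᵀ) (cDtD : Dᵀ * D = D * Dᵀ)
    (hsum4 : A * Aᵀ + B * Bᵀ + B * Bᵀ + D * Dᵀ =
      (172 : ℤ) • (1 : Matrix (ZMod 43) (ZMod 43) ℤ)) :
    GParray 43 A B B D * (GParray 43 A B B D)ᵀ =
      (172 : ℤ) • (1 : Matrix (Fin 4 × ZMod 43) (Fin 4 × ZMod 43) ℤ) ∧
    (GParray 43 A B B D)ᵀ = GParray 43 A B B D := by
  have hRR : backDiag 43 * backDiag 43 = 1 := backDiag_mul_backDiag
  have hRT : (backDiag 43)ᵀ = backDiag 43 := backDiag_transpose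
  set R := backDiag 43 with hRdef
  -- generic helpers
  have mulR : ∀ X Y Z : Matrix (ZMod 43) (ZMod 43) ℤ,
      R * Y = Z * R → (X * R) * (Y * R) = X * Z := by
    intro X Y Z h
    have inner : R * (Y * R) = Z := by
      rw [← Matrix.mul_assoc, h, Matrix.mul_assoc, hRR, Matrix.mul_one]
    rw [Matrix.mul_assoc, inner]
  have mulC : ∀ X Y Z : Matrix (ZMod 43) (ZMod 43) ℤ,
      R * Y = Z * R → (X * R) * Y = (X * Z) * R := by
    intro X Y Z h
    rw [Matrix.mul_assoc, h, ← Matrix.mul_assoc]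
  have symX : ∀ Y Z : Matrix (ZMod 43) (ZMod 43) ℤ, R * Yᵀ = Z * R → (Y * R)ᵀ = Z * R := by
    intro Y Z h
    rw [Matrix.transpose_mul, hRT, h]
  have hRAt : R * Aᵀ = A * R := by rw [hA, hRA]
  have hRBtt : R * Bᵀᵀ = Bᵀ * R := by rw [Matrix.transpose_transpose]; exact hRB
  have hRDtt : R * Dᵀᵀ = Dᵀ * R := by rw [Matrix.transpose_transpose]; exact hRD
  have symA : (A * R)ᵀ = A * R := symX A A hRAt
  have symB : (B * R)ᵀ = B * R := symX B B hRBt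
  have symBt : (Bᵀ * R)ᵀ = Bᵀ * R := symX Bᵀ Bᵀ hRBtt
  have symD : (D * R)ᵀ = D * R := symX D D hRDt
  have symDt : (Dᵀ * R)ᵀ = Dᵀ * R := symX Dᵀ Dᵀ hRDtt
  have hAA : A * A = A * Aᵀ := by rw [hA]
  -- the ten block identities
  have h00 : (∑ c : Fin 4, blocksM A B B D 0 c * (blocksM A B B D 0 c)ᵀ) =
      (172 : ℤ) • 1 := by
    rw [Fin.sum_univ_four]
    show A * Aᵀ + (B*R) * (B*R)ᵀ + (B*R) * (B*R)ᵀ + (D*R) * (D*R)ᵀ = (172:ℤ) • 1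
    simp only [Matrix.transpose_neg, symB, symBt, symD, symDt, hA, neg_mul, mul_neg, neg_neg]
    rw [mulR B B Bᵀ hRB, mulR D D Dᵀ hRD, hAA, ← hsum4]
  have h11 : (∑ c : Fin 4, blocksM A B B D 1 c * (blocksM A B B D 1 c)ᵀ) =
      (172 : ℤ) • 1 := by
    rw [Fin.sum_univ_four]
    show (B*R) * (B*R)ᵀ + (Dᵀ*R) * (Dᵀ*R)ᵀ + (-A) * (-A)ᵀ +
      (-(Bᵀ*R)) * (-(Bᵀ*R))ᵀ = (172:ℤ) • 1
    simp only [Matrix.transpose_neg, symB, symBt, symD, symDt, hA, neg_mul, mul_neg, neg_neg]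
    rw [mulR B B Bᵀ hRB, mulR Dᵀ Dᵀ D hRDt, mulR Bᵀ Bᵀ B hRBt, cDtD, cBtB, hAA, ← hsum4]
    abel
  have h22 : (∑ c : Fin 4, blocksM A B B D 2 c * (blocksM A B B D 2 c)ᵀ) =
      (172 : ℤ) • 1 := by
    rw [Fin.sum_univ_four]
    show (B*R) * (B*R)ᵀ + (-A) * (-A)ᵀ + (-(Dᵀ*R)) * (-(Dᵀ*R))ᵀ +
      (Bᵀ*R) * (Bᵀ*R)ᵀ = (172:ℤ) • 1
    simp only [Matrix.transpose_neg, symB, symBt, symD, symDt, hA, neg_mul, mul_neg, neg_neg]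
    rw [mulR B B Bᵀ hRB, mulR Dᵀ Dᵀ D hRDt, mulR Bᵀ Bᵀ B hRBt, cDtD, cBtB, hAA, ← hsum4]
    abel
  have h33 : (∑ c : Fin 4, blocksM A B B D 3 c * (blocksM A B B D 3 c)ᵀ) =
      (172 : ℤ) • 1 := by
    rw [Fin.sum_univ_four]
    show (D*R) * (D*R)ᵀ + (-(Bᵀ*R)) * (-(Bᵀ*R))ᵀ + (Bᵀ*R) * (Bᵀ*R)ᵀ +
      (-A) * (-A)ᵀ = (172:ℤ) • 1
    simp only [Matrix.transpose_neg, symB, symBt, symD, symDt, hA, neg_mul, mul_neg, neg_neg]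
    rw [mulR D D Dᵀ hRD, mulR Bᵀ Bᵀ B hRBt, cBtB, hAA, ← hsum4]
    abel
  have h01 : (∑ c : Fin 4, blocksM A B B D 0 c * (blocksM A B B D 1 c)ᵀ) = 0 := by
    rw [Fin.sum_univ_four]
    show A * (B*R)ᵀ + (B*R) * (Dᵀ*R)ᵀ + (B*R) * (-A)ᵀ + (D*R) * (-(Bᵀ*R))ᵀ = 0
    simp only [Matrix.transpose_neg, symB, symBt, symD, symDt, hA, neg_mul, mul_neg, neg_neg]
    rw [← Matrix.mul_assoc A B R, mulR B Dᵀ D hRDt, mulC B A A hRA,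
      mulR D Bᵀ B hRBt, cAB, cBD]
    abel
  have h02 : (∑ c : Fin 4, blocksM A B B D 0 c * (blocksM A B B D 2 c)ᵀ) = 0 := by
    rw [Fin.sum_univ_four]
    show A * (B*R)ᵀ + (B*R) * (-A)ᵀ + (B*R) * (-(Dᵀ*R))ᵀ + (D*R) * (Bᵀ*R)ᵀ = 0
    simp only [Matrix.transpose_neg, symB, symBt, symD, symDt, hA, neg_mul, mul_neg, neg_neg]
    rw [← Matrix.mul_assoc A B R, mulC B A A hRA, mulR B Dᵀ D hRDt,
      mulR D Bᵀ B hRBt, cAB, cBD]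
    abel
  have h03 : (∑ c : Fin 4, blocksM A B B D 0 c * (blocksM A B B D 3 c)ᵀ) = 0 := by
    rw [Fin.sum_univ_four]
    show A * (D*R)ᵀ + (B*R) * (-(Bᵀ*R))ᵀ + (B*R) * (Bᵀ*R)ᵀ + (D*R) * (-A)ᵀ = 0
    simp only [Matrix.transpose_neg, symB, symBt, symD, symDt, hA, neg_mul, mul_neg, neg_neg]
    rw [← Matrix.mul_assoc A D R, mulR B Bᵀ B hRBt, mulC D A A hRA, cAD]
    abel
  have h12 : (∑ c : Fin 4, blocksM A B B D 1 c * (blocksM A B B D 2 c)ᵀ) = 0 := by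
    rw [Fin.sum_univ_four]
    show (B*R) * (B*R)ᵀ + (Dᵀ*R) * (-A)ᵀ + (-A) * (-(Dᵀ*R))ᵀ + (-(Bᵀ*R)) * (Bᵀ*R)ᵀ = 0
    simp only [Matrix.transpose_neg, symB, symBt, symD, symDt, hA, neg_mul, mul_neg, neg_neg]
    rw [mulR B B Bᵀ hRB, mulC Dᵀ A A hRA, ← Matrix.mul_assoc A Dᵀ R,
      mulR Bᵀ Bᵀ B hRBt, cADt, cBtB]
    abel
  have h13 : (∑ c : Fin 4, blocksM A B B D 1 c * (blocksM A B B D 3 c)ᵀ) = 0 := by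
    rw [Fin.sum_univ_four]
    show (B*R) * (D*R)ᵀ + (Dᵀ*R) * (-(Bᵀ*R))ᵀ + (-A) * (Bᵀ*R)ᵀ + (-(Bᵀ*R)) * (-A)ᵀ = 0
    simp only [Matrix.transpose_neg, symB, symBt, symD, symDt, hA, neg_mul, mul_neg, neg_neg]
    rw [mulR B D Dᵀ hRD, mulR Dᵀ Bᵀ B hRBt, ← Matrix.mul_assoc A Bᵀ R,
      mulC Bᵀ A A hRA, cBDt, cABt]
    abel
  have h23 : (∑ c : Fin 4, blocksM A B B D 2 c * (blocksM A B B D 3 c)ᵀ) = 0 := by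
    rw [Fin.sum_univ_four]
    show (B*R) * (D*R)ᵀ + (-A) * (-(Bᵀ*R))ᵀ + (-(Dᵀ*R)) * (Bᵀ*R)ᵀ + (Bᵀ*R) * (-A)ᵀ = 0
    simp only [Matrix.transpose_neg, symB, symBt, symD, symDt, hA, neg_mul, mul_neg, neg_neg]
    rw [mulR B D Dᵀ hRD, ← Matrix.mul_assoc A Bᵀ R, mulR Dᵀ Bᵀ B hRBt,
      mulC Bᵀ A A hRA, cBDt, cABt]
    abel
  have hswap : ∀ a b : Fin 4,
      (∑ c : Fin 4, blocksM A B B D a c * (blocksM A B B D b c)ᵀ) = 0 →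
      (∑ c : Fin 4, blocksM A B B D b c * (blocksM A B B D a c)ᵀ) = 0 := by
    intro a b h
    have := congrArg Matrix.transpose h
    rw [Matrix.transpose_sum] at this
    simp only [Matrix.transpose_mul, Matrix.transpose_transpose, Matrix.transpose_zero] at this
    exact this
  have hdiag : ∀ a : Fin 4,
      (∑ c : Fin 4, blocksM A B B D a c * (blocksM A B B D a c)ᵀ) = (172 : ℤ) • 1 := by
    intro a
    fin_cases a
    · exact h00
    · exact h11
    · exact h22
    · exact h33
  have hoff : ∀ a b : Fin 4, a ≠ b →
      (∑ c : Fin 4, blocksM A B B D a c * (blocksM A B B D b c)ᵀ) = 0 := by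
    intro a b hab
    fin_cases a <;> fin_cases b
    · exact absurd rfl hab
    · exact h01
    · exact h02
    · exact h03
    · exact hswap _ _ h01
    · exact absurd rfl hab
    · exact h12
    · exact h13
    · exact hswap _ _ h02
    · exact hswap _ _ h12
    · exact absurd rfl hab
    · exact h23
    · exact hswap _ _ h03
    · exact hswap _ _ h13
    · exact hswap _ _ h23
    · exact absurd rfl hab
  constructor
  · ext ⟨a, i⟩ ⟨b, j⟩
    rw [Matrix.mul_apply, Fintype.sum_prod_type]
    have step : ∀ c : Fin 4,
        (∑ k : ZMod 43, GParray 43 A B B D (a, i) (c, k) *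
          (GParray 43 A B B D)ᵀ (c, k) (b, j)) =
        (blocksM A B B D a c * (blocksM A B B D b c)ᵀ) i j := by
      intro c
      rw [Matrix.mul_apply]
      refine Finset.sum_congr rfl fun k _ => ?_
      rw [Matrix.transpose_apply, Matrix.transpose_apply, GParray_apply, GParray_apply]
    rw [Finset.sum_congr rfl fun c _ => step c, ← Matrix.sum_apply]
    by_cases hab : a = b
    · subst hab
      rw [hdiag a]
      simp only [Matrix.smul_apply, Matrix.one_apply, Prod.mk.injEq, true_and, smul_eq_mul]
    · rw [hoff a b hab]
      simp [Matrix.smul_apply, Matrix.one_apply, Prod.ext_iff, hab]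
  · have hsymM : ∀ a b : Fin 4, (blocksM A B B D b a)ᵀ = blocksM A B B D a b := by
      intro a b
      fin_cases a <;> fin_cases b <;>
        first
          | exact hA
          | (show (-A)ᵀ = -A; rw [Matrix.transpose_neg, hA])
          | exact symB | exact symBt | exact symD | exact symDt
          | (show (-(Bᵀ*R))ᵀ = -(Bᵀ*R); rw [Matrix.transpose_neg, symBt])
          | (show (-(Dᵀ*R))ᵀ = -(Dᵀ*R); rw [Matrix.transpose_neg, symDt])
    ext ⟨a, i⟩ ⟨b, j⟩
    rw [Matrix.transpose_apply, GParray_apply, GParray_apply]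
    show blocksM A B B D b a j i = blocksM A B B D a b i j
    rw [← hsymM a b]
    rfl

/-! ### entries of circOf matrices -/

lemma circOf_pm (X : Finset (ZMod 43)) (i j : ZMod 43) :
    circOf X i j = 1 ∨ circOf X i j = -1 := by
  by_cases h : j - i ∈ X
  · right; simp [circOf, h]
  · left; simp [circOf, h]

set_option maxHeartbeats 1000000 in
/-- For the subsets `A = {0,1,2,4,8,11,16,21,22,27,32,35,39,41,42}`,
`D = {0,1,3,4,5,8,12,13,14,18,19,20,21,23,26,27,29,30,32,34,36}` of `ℤ/43ℤ` and
the Paley difference set `B` (the nonzero quadratic residues mod 43), the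
associated binary circulant matrix `MA` is symmetric and
`MA·MAᵀ + 2·(MB·MBᵀ) + MD·MDᵀ = 172·I`; consequently the GP array built from
`(MA, MB, MB, MD)` is a symmetric Hadamard matrix of order `172`. -/
theorem symmetric_hadamard_172_construction :
    (circOf ({0, 1, 2, 4, 8, 11, 16, 21, 22, 27, 32, 35, 39, 41, 42} : Finset (ZMod 43)))ᵀ = circOf ({0, 1, 2, 4, 8, 11, 16, 21, 22, 27, 32, 35, 39, 41, 42} : Finset (ZMod 43)) ∧
    (circOf ({0, 1, 2, 4, 8, 11, 16, 21, 22, 27, 32, 35, 39, 41, 42} : Finset (ZMod 43))) * (circOf ({0, 1, 2, 4, 8, 11, 16, 21, 22, 27, 32, 35, 39, 41, 42} : Finset (ZMod 43)))ᵀ +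
      2 • ((paleyCirc) * (paleyCirc)ᵀ) +
      (circOf ({0, 1, 3, 4, 5, 8, 12, 13, 14, 18, 19, 20, 21, 23, 26, 27, 29, 30, 32, 34, 36} : Finset (ZMod 43))) * (circOf ({0, 1, 3, 4, 5, 8, 12, 13, 14, 18, 19, 20, 21, 23, 26, 27, 29, 30, 32, 34, 36} : Finset (ZMod 43)))ᵀ =
      (172 : ℤ) • (1 : Matrix (ZMod 43) (ZMod 43) ℤ) ∧
    (∀ p q, GParray 43 (circOf ({0, 1, 2, 4, 8, 11, 16, 21, 22, 27, 32, 35, 39, 41, 42} : Finset (ZMod 43))) (paleyCirc) (paleyCirc) (circOf ({0, 1, 3, 4, 5, 8, 12, 13, 14, 18, 19, 20, 21, 23, 26, 27, 29, 30, 32, 34, 36} : Finset (ZMod 43))) p q = 1 ∨ GParray 43 (circOf ({0, 1, 2, 4, 8, 11, 16, 21, 22, 27, 32, 35, 39, 41, 42} : Finset (ZMod 43))) (paleyCirc) (paleyCirc) (circOf ({0, 1, 3, 4, 5, 8, 12, 13, 14, 18, 19, 20, 21, 23, 26, 27, 29, 30, 32, 34, 36} : Finset (ZMod 43))) p q = -1)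 ∧
    GParray 43 (circOf ({0, 1, 2, 4, 8, 11, 16, 21, 22, 27, 32, 35, 39, 41, 42} : Finset (ZMod 43))) (paleyCirc) (paleyCirc) (circOf ({0, 1, 3, 4, 5, 8, 12, 13, 14, 18, 19, 20, 21, 23, 26, 27, 29, 30, 32, 34, 36} : Finset (ZMod 43))) * (GParray 43 (circOf ({0, 1, 2, 4, 8, 11, 16, 21, 22, 27, 32, 35, 39, 41, 42} : Finset (ZMod 43))) (paleyCirc) (paleyCirc) (circOf ({0, 1, 3, 4, 5, 8, 12, 13, 14, 18, 19, 20, 21, 23, 26, 27, 29, 30, 32, 34, 36} : Finset (ZMod 43))))ᵀ =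
      (172 : ℤ) • (1 : Matrix (Fin 4 × ZMod 43) (Fin 4 × ZMod 43) ℤ) ∧
    (GParray 43 (circOf ({0, 1, 2, 4, 8, 11, 16, 21, 22, 27, 32, 35, 39, 41, 42} : Finset (ZMod 43))) (paleyCirc) (paleyCirc) (circOf ({0, 1, 3, 4, 5, 8, 12, 13, 14, 18, 19, 20, 21, 23, 26, 27, 29, 30, 32, 34, 36} : Finset (ZMod 43))))ᵀ = GParray 43 (circOf ({0, 1, 2, 4, 8, 11, 16, 21, 22, 27, 32, 35, 39, 41, 42} : Finset (ZMod 43))) (paleyCirc) (paleyCirc) (circOf ({0, 1, 3, 4, 5, 8, 12, 13, 14, 18, 19, 20, 21, 23, 26, 27, 29, 30, 32, 34, 36} : Finset (ZMod 43))) := by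
  have hSA : ({0, 1, 2, 4, 8, 11, 16, 21, 22, 27, 32, 35, 39, 41, 42} : Finset (ZMod 43)) = SA := rfl
  have hSD : ({0, 1, 3, 4, 5, 8, 12, 13, 14, 18, 19, 20, 21, 23, 26, 27, 29, 30, 32, 34, 36} : Finset (ZMod 43)) = SD := rfl
  have hPB : paleyCirc = circOf SB := by
    rw [paleyCirc, paleySet_eq]
  rw [hSA, hSD, hPB]
  -- Part 1: symmetry of circOf SA
  have hsymSA : ∀ x : ZMod 43, x ∈ SA ↔ -x ∈ SA := by decide
  have hAT : (circOf SA)ᵀ = circOf SA := by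
    ext i j
    simp only [circOf, Matrix.transpose_apply, Matrix.of_apply]
    exact if_congr ((hsymSA _).trans (by rw [neg_sub])) rfl rfl
  -- Part 2: the sum identity
  have hchi : ∀ (X : Finset (ZMod 43)) (r s : ZMod 43), circOf X r s = chi X (s - r) := by
    intro X r s; rfl
  have hsum2 : circOf SA * (circOf SA)ᵀ + (circOf SB * (circOf SB)ᵀ +
      circOf SB * (circOf SB)ᵀ) + circOf SD * (circOf SD)ᵀ =
      (172 : ℤ) • (1 : Matrix (ZMod 43) (ZMod 43) ℤ) := by
    ext i j
    simp only [Matrix.add_apply, Matrix.mul_apply, Matrix.transpose_apply,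
      Matrix.smul_apply, Matrix.one_apply, smul_eq_mul]
    rw [← Finset.sum_add_distrib, ← Finset.sum_add_distrib, ← Finset.sum_add_distrib]
    have step1 : ∀ t : ZMod 43,
        circOf SA i t * circOf SA j t + (circOf SB i t * circOf SB j t +
          circOf SB i t * circOf SB j t) + circOf SD i t * circOf SD j t =
        chi SA (t - i) * chi SA ((t - i) + (i - j)) +
          2 * (chi SB (t - i) * chi SB ((t - i) + (i - j))) +
          chi SD (t - i) * chi SD ((t - i) + (i - j)) := by
      intro t
      rw [hchi SA i t, hchi SA j t, hchi SB i t, hchi SB j t, hchi SD i t, hchi SD j t,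
        show t - j = (t - i) + (i - j) by ring]
      ring
    rw [Finset.sum_congr rfl fun t _ => step1 t]
    rw [Fintype.sum_equiv (Equiv.subRight i)
      (fun t => chi SA (t - i) * chi SA ((t - i) + (i - j)) +
        2 * (chi SB (t - i) * chi SB ((t - i) + (i - j))) +
        chi SD (t - i) * chi SD ((t - i) + (i - j)))
      (fun u => chi SA u * chi SA (u + (i - j)) +
        2 * (chi SB u * chi SB (u + (i - j))) +
        chi SD u * chi SD (u + (i - j))) (fun t => rfl)]
    rw [key (i - j)]
    by_cases hij : i = j
    · simp [hij]
    · rw [if_neg (by simpa [sub_eq_zero] using hij), if_neg hij, mul_zero]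
  have hsum : circOf SA * (circOf SA)ᵀ + 2 • (circOf SB * (circOf SB)ᵀ) +
      circOf SD * (circOf SD)ᵀ = (172 : ℤ) • (1 : Matrix (ZMod 43) (ZMod 43) ℤ) := by
    rw [two_smul]
    exact hsum2
  have hsum4 : circOf SA * (circOf SA)ᵀ + circOf SB * (circOf SB)ᵀ +
      circOf SB * (circOf SB)ᵀ + circOf SD * (circOf SD)ᵀ =
      (172 : ℤ) • (1 : Matrix (ZMod 43) (ZMod 43) ℤ) := by
    rw [← hsum2]; abel
  have hcc := circOf_eq_circulant
  have hRA : backDiag 43 * circOf SA = circOf SA * backDiag 43 := by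
    rw [hcc SA, backDiag_mul_circulant, ← hcc SA, hAT]
  have hRB : backDiag 43 * circOf SB = (circOf SB)ᵀ * backDiag 43 := by
    rw [hcc SB, backDiag_mul_circulant]
  have hRBt : backDiag 43 * (circOf SB)ᵀ = circOf SB * backDiag 43 := by
    rw [hcc SB]; exact backDiag_mul_circulant_t _
  have hRD : backDiag 43 * circOf SD = (circOf SD)ᵀ * backDiag 43 := by
    rw [hcc SD, backDiag_mul_circulant]
  have hRDt : backDiag 43 * (circOf SD)ᵀ = circOf SD * backDiag 43 := by
    rw [hcc SD]; exact backDiag_mul_circulant_t _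
  have cAB : circOf SA * circOf SB = circOf SB * circOf SA := by
    rw [hcc SA, hcc SB]; exact Matrix.circulant_mul_comm _ _
  have cAD : circOf SA * circOf SD = circOf SD * circOf SA := by
    rw [hcc SA, hcc SD]; exact Matrix.circulant_mul_comm _ _
  have cBD : circOf SB * circOf SD = circOf SD * circOf SB := by
    rw [hcc SB, hcc SD]; exact Matrix.circulant_mul_comm _ _
  have cABt : circOf SA * (circOf SB)ᵀ = (circOf SB)ᵀ * circOf SA := by
    rw [hcc SA, hcc SB, Matrix.transpose_circulant]; exact Matrix.circulant_mul_comm _ _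
  have cADt : circOf SA * (circOf SD)ᵀ = (circOf SD)ᵀ * circOf SA := by
    rw [hcc SA, hcc SD, Matrix.transpose_circulant]; exact Matrix.circulant_mul_comm _ _
  have cBDt : circOf SB * (circOf SD)ᵀ = (circOf SD)ᵀ * circOf SB := by
    rw [hcc SB, hcc SD, Matrix.transpose_circulant]; exact Matrix.circulant_mul_comm _ _
  have cBtB : (circOf SB)ᵀ * circOf SB = circOf SB * (circOf SB)ᵀ := by
    rw [hcc SB, Matrix.transpose_circulant]; exact Matrix.circulant_mul_comm _ _
  have cDtD : (circOf SD)ᵀ * circOf SD = circOf SD * (circOf SD)ᵀ := by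
    rw [hcc SD, Matrix.transpose_circulant]; exact Matrix.circulant_mul_comm _ _
  obtain ⟨hGP1, hGP2⟩ := GP_master (circOf SA) (circOf SB) (circOf SD) hAT hRA hRB hRBt hRD hRDt
    cAB cAD cBD cABt cADt cBDt cBtB cDtD hsum4

  refine ⟨hAT, hsum, ?_, hGP1, hGP2⟩
  · -- entries are ±1
    intro p q
    have hcR : ∀ (X : Finset (ZMod 43)) i j, (circOf X * backDiag 43) i j = 1 ∨
        (circOf X * backDiag 43) i j = -1 := by
      intro X i j; rw [mul_backDiag_apply]; exact circOf_pm X _ _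
    have hcTR : ∀ (X : Finset (ZMod 43)) i j, ((circOf X)ᵀ * backDiag 43) i j = 1 ∨
        ((circOf X)ᵀ * backDiag 43) i j = -1 := by
      intro X i j; rw [mul_backDiag_apply, Matrix.transpose_apply]; exact circOf_pm X _ _
    have hneg : ∀ x : ℤ, (x = 1 ∨ x = -1) → (-x = 1 ∨ -x = -1) := by
      rintro x (rfl | rfl) <;> simp
    obtain ⟨a, i⟩ := p
    obtain ⟨b, j⟩ := q
    rw [GParray_apply]
    fin_cases a <;> fin_cases b
    · exact circOf_pm _ _ _
    · exact hcR _ _ _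
    · exact hcR _ _ _
    · exact hcR _ _ _
    · exact hcR _ _ _
    · exact hcTR _ _ _
    · exact hneg _ (circOf_pm _ _ _)
    · exact hneg _ (hcTR _ _ _)
    · exact hcR _ _ _
    · exact hneg _ (circOf_pm _ _ _)
    · exact hneg _ (hcTR _ _ _)
    · exact hcTR _ _ _
    · exact hcR _ _ _
    · exact hneg _ (hcTR _ _ _)
    · exact hcTR _ _ _
    · exact hneg _ (circOf_pm _ _ _)
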